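/- Fix n ≥ 1, a point x⁰ ∈ ℝⁿ, and a positive real h; consider the hypercube with all side lengths Δ_i = h, so Δ = hⁿ and Δ_S = h√n. Let f : ℝⁿ → ℝ be twice continuously differentiable on an open set containing R(x⁰;d) = {x⁰ + x : 0 ≤ x_i ≤ h}, with ∇f Lipschitz continuous with constant L_{∇f} on R(x⁰;d). Let L_n ∈ ℝ^{n×n} have entries [L_n]_{i,i} = 12(3n−2)/(h²(3n+1)) and [L_n]_{i,j} = −36/(h²(3n+1)) for i ≠ j, and let T_n ∈ ℝⁿ have components [T_n]_i = ∫ x_i (f(x⁰+x) − f(x⁰)) dx over the box [0,h]ⁿ. Then ‖Δ⁻¹ · L_n · T_n − ∇f(x⁰)‖ ≤ ((2n+1)/2) · L_{∇f} · Δ_S. -/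

import Mathlib

open scoped BigOperators

noncomputable section

/-- Interpret a plain vector in `Fin n → ℝ` as an element of Euclidean space,
so that `‖·‖` is the Euclidean norm. -/
def vecE {n : ℕ} (v : Fin n → ℝ) : EuclideanSpace ℝ (Fin n) :=
  (EuclideanSpace.equiv (Fin n) ℝ).symm v

/-- The cube `[0,h]ⁿ` in Euclidean space. -/
def cube (n : ℕ) (h : ℝ) : Set (EuclideanSpace ℝ (Fin n)) :=
  {x | ∀ l, x l ∈ Set.Icc (0 : ℝ) h}

/-- The limit matrix `Lₙ` for the hypercube of side `h`. -/
def LmatCube (n : ℕ) (h : ℝ) : Matrix (Fin n) (Fin n) ℝ :=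
  Matrix.of fun i j =>
    if i = j then 12 * (3 * (n : ℝ) - 2) / (h ^ 2 * (3 * (n : ℝ) + 1))
    else -36 / (h ^ 2 * (3 * (n : ℝ) + 1))


/-!
Write `f (x⁰ + x) - f x⁰ = ⟪∇f x⁰, x⟫ + r x`; since `∇f` is `L`-Lipschitz on the box,
`|r x| ≤ L ‖x‖² / 2`. The linear part contributes the moment matrix
`∫ x_j x_l = h^(n+2)/12 (I + 3J)` applied to `∇f x⁰` (`J` the all-ones matrix), and
`Lₙ = 12/h² (I - 3/(3n+1) J)` is `hⁿ` times its inverse, so the error is `Δ⁻¹ Lₙ` applied to the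
vector `(∫ x_j r x)_j`. Each entry of that vector is at most
`(L/2) ∫ x_j ‖x‖² = L h^(n+3) (2n+1) / 24`, and `‖Lₙ‖ = 12/h²`, which gives the bound.
-/

open MeasureTheory Set WithLp
open scoped InnerProductSpace Matrix NNReal

theorem abs_sub_sub_inner_gradient_le_of_lipschitzOnWith {E : Type*} [NormedAddCommGroup E]
    [InnerProductSpace ℝ E] [CompleteSpace E] {f : E → ℝ} {s : Set E} {L : ℝ≥0}
    (hs : Convex ℝ s) (hf : ∀ x ∈ s, DifferentiableAt ℝ f x)
    (hlip : LipschitzOnWith L (gradient f) s) {x y : E} (hx : x ∈ s) (hy : y ∈ s) :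
    |f y - f x - ⟪gradient f x, y - x⟫_ℝ| ≤ L / 2 * ‖y - x‖ ^ 2 := by
  set v := y - x
  have hseg : ∀ t ∈ Icc (0 : ℝ) 1, x + t • v ∈ s := fun t ht =>
    hs.add_smul_sub_mem hx hy ht
  have hderiv : ∀ t ∈ Icc (0 : ℝ) 1,
      HasDerivAt (fun t : ℝ => f (x + t • v) - f x - t * ⟪gradient f x, v⟫_ℝ)
        ⟪gradient f (x + t • v) - gradient f x, v⟫_ℝ t := by
    intro t ht
    have hline : HasDerivAt (fun t : ℝ => x + t • v) v t := by
      simpa using ((hasDerivAt_id t).smul_const v).const_add x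
    have hcomp : HasDerivAt (fun t : ℝ => f (x + t • v)) ⟪gradient f (x + t • v), v⟫_ℝ t := by
      simpa [Function.comp_def] using
        (hf _ (hseg t ht)).hasGradientAt.hasFDerivAt.comp_hasDerivAt t hline
    have hlin : HasDerivAt (fun t : ℝ => t * ⟪gradient f x, v⟫_ℝ) ⟪gradient f x, v⟫_ℝ t := by
      simpa using (hasDerivAt_id t).mul_const ⟪gradient f x, v⟫_ℝ
    rw [inner_sub_left]
    exact (hcomp.sub_const (f x)).sub hlin
  have hbound : ∀ t ∈ Ico (0 : ℝ) 1,
      ‖⟪gradient f (x + t • v) - gradient f x, v⟫_ℝ‖ ≤ L * t * ‖v‖ ^ 2 := by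
    intro t ht
    have hlip_t : ‖gradient f (x + t • v) - gradient f x‖ ≤ L * (t * ‖v‖) := by
      simpa [dist_eq_norm, norm_smul, abs_of_nonneg ht.1] using
        hlip.dist_le_mul _ (hseg t (Ico_subset_Icc_self ht)) _ hx
    calc ‖⟪gradient f (x + t • v) - gradient f x, v⟫_ℝ‖
        ≤ ‖gradient f (x + t • v) - gradient f x‖ * ‖v‖ := norm_inner_le_norm _ _
      _ ≤ L * (t * ‖v‖) * ‖v‖ := by gcongr
      _ = L * t * ‖v‖ ^ 2 := by ring
  have hB : ∀ t : ℝ, HasDerivAt (fun t : ℝ => L / 2 * t ^ 2 * ‖v‖ ^ 2) (L * t * ‖v‖ ^ 2) t :=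
    fun t => (((hasDerivAt_pow 2 t).const_mul (L / 2 : ℝ)).mul_const (‖v‖ ^ 2)).congr_deriv
      (by simp only [Nat.cast_ofNat, Nat.add_one_sub_one, pow_one]; ring)
  have hfence := image_norm_le_of_norm_deriv_right_le_deriv_boundary
    (fun t ht => (hderiv t ht).continuousAt.continuousWithinAt)
    (fun t ht => (hderiv t (Ico_subset_Icc_self ht)).hasDerivWithinAt) (by simp) hB hbound
    (right_mem_Icc.2 zero_le_one)
  simpa [v] using hfence

lemma Fintype.sum_ite_mul_eq {ι R : Type*} [Fintype ι] [DecidableEq ι] [CommRing R] (j : ι)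
    (a b : R) (v : ι → R) :
    ∑ k, (if j = k then a else b) * v k = (a - b) * v j + b * ∑ k, v k := by
  calc ∑ k, (if j = k then a else b) * v k
      = ∑ k, ((if j = k then (a - b) * v k else 0) + b * v k) :=
        Finset.sum_congr rfl fun k _ => by split_ifs <;> ring
    _ = (a - b) * v j + b * ∑ k, v k := by
        rw [Finset.sum_add_distrib, Finset.sum_ite_eq, Finset.mul_sum, if_pos (Finset.mem_univ j)]

/-- `I - βJ` has eigenvalues `1` and `1 - β · card ι`, both in `[-1, 1]`. -/
lemma sum_sq_sub_mul_sum_le {ι : Type*} [Fintype ι] {β : ℝ} (hβ : 0 ≤ β)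
    (hβι : β * Fintype.card ι ≤ 2) (v : ι → ℝ) :
    ∑ j, (v j - β * ∑ k, v k) ^ 2 ≤ ∑ j, v j ^ 2 := by
  set s := ∑ k, v k
  have hexpand : ∑ j, (v j - β * s) ^ 2 = ∑ j, v j ^ 2 - β * s ^ 2 * (2 - β * Fintype.card ι) := by
    simp only [sub_sq, Finset.sum_add_distrib, Finset.sum_sub_distrib, ← Finset.sum_mul,
      ← Finset.mul_sum, Finset.sum_const, Finset.card_univ, nsmul_eq_mul]
    ring
  have : 0 ≤ β * s ^ 2 * (2 - β * Fintype.card ι) := by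
    have := sub_nonneg.mpr hβι
    positivity
  linarith

section

variable {n : ℕ} {h : ℝ}

@[simp]
lemma vecE_apply (v : Fin n → ℝ) (j : Fin n) : vecE v j = v j := rfl

lemma norm_vecE_le_sqrt_mul {v : Fin n → ℝ} {C : ℝ} (hC : 0 ≤ C) (hv : ∀ j, |v j| ≤ C) :
    ‖vecE v‖ ≤ √n * C := by
  rw [← sq_le_sq₀ (norm_nonneg _) (by positivity), mul_pow, Real.sq_sqrt (Nat.cast_nonneg n),
    EuclideanSpace.real_norm_sq_eq]
  calc ∑ j, vecE v j ^ 2 ≤ ∑ _j : Fin n, C ^ 2 := Finset.sum_le_sum fun j _ => by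
        rw [← sq_abs]
        gcongr
        exact hv j
    _ = n * C ^ 2 := by simp

lemma cube_eq_preimage_pi : cube n h = ofLp ⁻¹' univ.pi fun _ : Fin n => Icc 0 h := by
  ext x
  exact ⟨fun hx l _ => hx l, fun hx l => hx l (mem_univ l)⟩

lemma isCompact_cube : IsCompact (cube n h) := by
  rw [cube_eq_preimage_pi]
  exact (EuclideanSpace.equiv (Fin n) ℝ).toHomeomorph.isCompact_preimage.mpr
    (isCompact_univ_pi fun _ => isCompact_Icc)

lemma measurableSet_cube : MeasurableSet (cube n h) := by
  rw [cube_eq_preimage_pi]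
  exact (MeasurableEquiv.toLp 2 (Fin n → ℝ)).symm.measurable
    (MeasurableSet.univ_pi fun _ => measurableSet_Icc)

lemma convex_cube : Convex ℝ (cube n h) := by
  rw [cube_eq_preimage_pi]
  exact (convex_pi fun _ _ => convex_Icc 0 h).linear_preimage
    (WithLp.linearEquiv 2 ℝ (Fin n → ℝ)).toLinearMap

lemma ContinuousOn.integrableOn_cube {F : EuclideanSpace ℝ (Fin n) → ℝ}
    (hF : ContinuousOn F (cube n h)) : IntegrableOn F (cube n h) :=
  hF.integrableOn_compact isCompact_cube

lemma setIntegral_cube_prod (w : Fin n → ℝ → ℝ) :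
    ∫ x in cube n h, ∏ m, w m (x m) = ∏ m, ∫ t in Icc 0 h, w m t := by
  rw [cube_eq_preimage_pi, (PiLp.volume_preserving_ofLp (Fin n)).setIntegral_preimage_emb
    (MeasurableEquiv.toLp 2 (Fin n → ℝ)).symm.measurableEmbedding
    (fun y : Fin n → ℝ => ∏ m, w m (y m)), volume_pi, Measure.restrict_pi_pi,
    integral_fintype_prod_eq_prod]

lemma setIntegral_cube_monomial (hh : 0 ≤ h) (k : Fin n → ℕ) :
    ∫ x in cube n h, ∏ m, x m ^ k m = h ^ n * ∏ m, h ^ k m / (k m + 1) := by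
  rw [setIntegral_cube_prod (fun m t => t ^ k m), ← Fin.prod_const, ← Finset.prod_mul_distrib]
  refine Finset.prod_congr rfl fun m _ => ?_
  rw [integral_Icc_eq_integral_Ioc, ← intervalIntegral.integral_of_le hh, integral_pow]
  ring

lemma setIntegral_cube_coord_pow_mul_coord_pow (hh : 0 ≤ h) (j l : Fin n) (p q : ℕ) :
    ∫ x in cube n h, x j ^ p * x l ^ q =
      h ^ n * if j = l then h ^ (p + q) / (p + q + 1) else h ^ p / (p + 1) * (h ^ q / (q + 1)) := by
  set k : Fin n → ℕ := fun m => (if m = j then p else 0) + (if m = l then q else 0)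
  have hmono : ∀ x : EuclideanSpace ℝ (Fin n), x j ^ p * x l ^ q = ∏ m, x m ^ k m := by
    intro x
    simp only [k, pow_add, Finset.prod_mul_distrib, pow_ite, pow_zero, Finset.prod_ite_eq',
      Finset.mem_univ, if_true]
  simp_rw [hmono, setIntegral_cube_monomial hh k]
  congr 1
  split_ifs with hjl
  · subst hjl
    rw [Finset.prod_eq_single j (fun m _ hm => by simp [k, hm]) (by simp)]
    simp [k]
  · rw [Finset.prod_eq_mul j l hjl (fun m _ hm => by simp [k, hm.1, hm.2]) (by simp) (by simp)]
    simp [k, hjl, Ne.symm hjl]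

lemma setIntegral_cube_coord_mul_inner (hh : 0 ≤ h) (g : EuclideanSpace ℝ (Fin n)) (j : Fin n) :
    ∫ x in cube n h, x j * ⟪g, x⟫_ℝ = h ^ (n + 2) / 12 * (g j + 3 * ∑ l, g l) := by
  have hexpand : ∀ x : EuclideanSpace ℝ (Fin n),
      x j * ⟪g, x⟫_ℝ = ∑ l, g l * (x j ^ 1 * x l ^ 1) := by
    intro x
    simp only [PiLp.inner_apply, RCLike.inner_apply, conj_trivial, Finset.mul_sum, pow_one]
    exact Finset.sum_congr rfl fun l _ => by ring
  simp_rw [hexpand]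
  rw [integral_finsetSum _ fun l _ => (by fun_prop : Continuous _).continuousOn.integrableOn_cube]
  simp_rw [integral_const_mul, setIntegral_cube_coord_pow_mul_coord_pow hh]
  trans ∑ l, (if j = l then h ^ (n + 2) / 3 else h ^ (n + 2) / 4) * g l
  · exact Finset.sum_congr rfl fun l _ => by split_ifs <;> push_cast <;> ring
  · rw [Fintype.sum_ite_mul_eq]
    ring

lemma setIntegral_cube_coord_mul_norm_sq (hh : 0 ≤ h) (j : Fin n) :
    ∫ x in cube n h, x j * ‖x‖ ^ 2 = h ^ (n + 3) * (2 * n + 1) / 12 := by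
  have hexpand : ∀ x : EuclideanSpace ℝ (Fin n), x j * ‖x‖ ^ 2 = ∑ l, x j ^ 1 * x l ^ 2 := by
    intro x
    rw [EuclideanSpace.real_norm_sq_eq, Finset.mul_sum, pow_one]
  simp_rw [hexpand]
  rw [integral_finsetSum _ fun l _ => (by fun_prop : Continuous _).continuousOn.integrableOn_cube]
  simp_rw [setIntegral_cube_coord_pow_mul_coord_pow hh]
  trans ∑ l, (if j = l then h ^ (n + 3) / 4 else h ^ (n + 3) / 6) * 1
  · exact Finset.sum_congr rfl fun l _ => by split_ifs <;> push_cast <;> ring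
  · rw [Fintype.sum_ite_mul_eq, Finset.sum_const, Finset.card_univ, Fintype.card_fin,
      nsmul_eq_mul]
    ring

lemma setIntegral_cube_coord_mul_eq_moment_add (hh : 0 ≤ h) {φ : EuclideanSpace ℝ (Fin n) → ℝ}
    (hφ : ContinuousOn φ (cube n h)) (g : EuclideanSpace ℝ (Fin n)) (j : Fin n) :
    ∫ x in cube n h, x j * φ x =
      h ^ (n + 2) / 12 * (g j + 3 * ∑ l, g l) + ∫ x in cube n h, x j * (φ x - ⟪g, x⟫_ℝ) := by
  have hcoord : Continuous fun x : EuclideanSpace ℝ (Fin n) => x j := by fun_prop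
  rw [← setIntegral_cube_coord_mul_inner hh, ← integral_add]
  · simp_rw [← mul_add, add_sub_cancel]
  · exact (by fun_prop : Continuous _).continuousOn.integrableOn_cube
  · exact (hcoord.continuousOn.mul (hφ.sub (by fun_prop))).integrableOn_cube

lemma abs_setIntegral_cube_coord_mul_le (hh : 0 ≤ h) {r : EuclideanSpace ℝ (Fin n) → ℝ} {C : ℝ}
    (hr : ∀ x ∈ cube n h, |r x| ≤ C * ‖x‖ ^ 2) (j : Fin n) :
    |∫ x in cube n h, x j * r x| ≤ C * (h ^ (n + 3) * (2 * n + 1) / 12) := by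
  have hbound : Continuous fun x : EuclideanSpace ℝ (Fin n) => C * (x j * ‖x‖ ^ 2) := by fun_prop
  rw [← setIntegral_cube_coord_mul_norm_sq hh, ← integral_const_mul, ← Real.norm_eq_abs]
  refine norm_integral_le_of_norm_le hbound.continuousOn.integrableOn_cube
    ((ae_restrict_mem measurableSet_cube).mono fun x hx => ?_)
  have hxj : 0 ≤ x j := (hx j).1
  rw [Real.norm_eq_abs, abs_mul, abs_of_nonneg hxj, mul_left_comm]
  exact mul_le_mul_of_nonneg_left (hr x hx) hxj

lemma LmatCube_mulVec_apply (v : Fin n → ℝ) (j : Fin n) :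
    (LmatCube n h *ᵥ v) j = 12 / h ^ 2 * (v j - 3 / (3 * n + 1) * ∑ k, v k) := by
  simp only [Matrix.mulVec, dotProduct, LmatCube, Matrix.of_apply]
  rw [Fintype.sum_ite_mul_eq]
  have : (3 * (n : ℝ) + 1) ≠ 0 := by positivity
  field_simp
  ring

lemma LmatCube_mulVec_moment (hh : h ≠ 0) (g : Fin n → ℝ) :
    LmatCube n h *ᵥ (fun j => h ^ (n + 2) / 12 * (g j + 3 * ∑ l, g l)) = h ^ n • g := by
  ext j
  have hsum : ∑ k, h ^ (n + 2) / 12 * (g k + 3 * ∑ l, g l)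
      = h ^ (n + 2) / 12 * ((3 * n + 1) * ∑ l, g l) := by
    rw [← Finset.mul_sum, Finset.sum_add_distrib, Finset.sum_const, Finset.card_univ,
      Fintype.card_fin, nsmul_eq_mul]
    ring
  have : (3 * (n : ℝ) + 1) ≠ 0 := by positivity
  rw [LmatCube_mulVec_apply, hsum, Pi.smul_apply, smul_eq_mul]
  field_simp
  ring

lemma norm_vecE_LmatCube_mulVec_le (v : Fin n → ℝ) :
    ‖vecE (LmatCube n h *ᵥ v)‖ ≤ 12 / h ^ 2 * ‖vecE v‖ := by
  rw [← sq_le_sq₀ (norm_nonneg _) (by positivity), mul_pow, EuclideanSpace.real_norm_sq_eq,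
    EuclideanSpace.real_norm_sq_eq]
  simp_rw [vecE_apply, LmatCube_mulVec_apply, mul_pow, ← Finset.mul_sum]
  refine mul_le_mul_of_nonneg_left (sum_sq_sub_mul_sum_le (by positivity) ?_ v) (by positivity)
  rw [Fintype.card_fin, div_mul_eq_mul_div, div_le_iff₀ (by positivity)]
  linarith

lemma norm_vecE_smul_LmatCube_mulVec_moment_add_sub_le (hh : 0 < h) (g : EuclideanSpace ℝ (Fin n))
    {e : Fin n → ℝ} {C : ℝ} (hC : 0 ≤ C) (he : ∀ j, |e j| ≤ C) :
    ‖vecE ((h ^ n)⁻¹ • (LmatCube n h *ᵥ fun j => h ^ (n + 2) / 12 * (g j + 3 * ∑ l, g l) + e j))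
        - g‖ ≤ (h ^ n)⁻¹ * (12 / h ^ 2 * (√n * C)) := by
  have hsplit : (fun j => h ^ (n + 2) / 12 * (g j + 3 * ∑ l, g l) + e j)
      = (fun j => h ^ (n + 2) / 12 * (g j + 3 * ∑ l, g l)) + e := rfl
  have hvec : ∀ w : Fin n → ℝ, vecE (WithLp.ofLp g + w) - g = vecE w := fun w => by ext j; simp
  rw [hsplit, Matrix.mulVec_add, LmatCube_mulVec_moment hh.ne', smul_add, smul_smul,
    inv_mul_cancel₀ (pow_pos hh n).ne', one_smul, hvec]
  calc ‖vecE ((h ^ n)⁻¹ • (LmatCube n h *ᵥ e))‖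
      = (h ^ n)⁻¹ * ‖vecE (LmatCube n h *ᵥ e)‖ := by
        rw [← norm_smul_of_nonneg (by positivity)]
        rfl
    _ ≤ (h ^ n)⁻¹ * (12 / h ^ 2 * (√n * C)) := by
        gcongr
        exact (norm_vecE_LmatCube_mulVec_le e).trans (by gcongr; exact norm_vecE_le_sqrt_mul hC he)

end

theorem error_bound_ad_infinitum_hypercube_general
    (n : ℕ)
    (x0 : EuclideanSpace ℝ (Fin n))
    (h : ℝ) (hh : 0 < h)
    (f : EuclideanSpace ℝ (Fin n) → ℝ)
    (U : Set (EuclideanSpace ℝ (Fin n))) (hU : IsOpen U)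
    (hsub : {y : EuclideanSpace ℝ (Fin n) | ∀ l, y l - x0 l ∈ Set.Icc (0 : ℝ) h} ⊆ U)
    (hf : ContDiffOn ℝ 2 f U)
    (L : NNReal)
    (hlip : LipschitzOnWith L (gradient f)
      {y : EuclideanSpace ℝ (Fin n) | ∀ l, y l - x0 l ∈ Set.Icc (0 : ℝ) h}) :
    ‖vecE ((h ^ n : ℝ)⁻¹ •
        Matrix.mulVec (LmatCube n h)
          (fun j => ∫ x in cube n h, x j * (f (x0 + x) - f x0)))
      - gradient f x0‖
      ≤ ((2 * (n : ℝ) + 1) / 2) * (L : ℝ) * (h * Real.sqrt n) := by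
  set S := {y : EuclideanSpace ℝ (Fin n) | ∀ l, y l - x0 l ∈ Set.Icc (0 : ℝ) h}
  have hS : S = (fun y => -x0 + y) ⁻¹' cube n h := by
    ext y
    simp [S, cube, neg_add_eq_sub]
  have hmem : ∀ x ∈ cube n h, x0 + x ∈ S := fun x hx => by simpa [hS] using hx
  have hφ : ContinuousOn (fun x => f (x0 + x) - f x0) (cube n h) :=
    (hf.continuousOn.comp (by fun_prop : Continuous fun x => x0 + x).continuousOn
      fun x hx => hsub (hmem x hx)).sub continuousOn_const
  have htaylor : ∀ x ∈ cube n h,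
      |f (x0 + x) - f x0 - ⟪gradient f x0, x⟫_ℝ| ≤ L / 2 * ‖x‖ ^ 2 := fun x hx => by
    have hquad := abs_sub_sub_inner_gradient_le_of_lipschitzOnWith
      (hS ▸ convex_cube.translate_preimage_right (-x0))
      (fun y hy => (hf.contDiffAt (hU.mem_nhds (hsub hy))).differentiableAt (by norm_num))
      hlip (by simpa using hmem 0 fun l => by simp [hh.le]) (hmem x hx)
    rwa [add_sub_cancel_left] at hquad
  simp_rw [setIntegral_cube_coord_mul_eq_moment_add hh.le hφ (gradient f x0)]
  calc _ ≤ (h ^ n)⁻¹ * (12 / h ^ 2 * (√n * (L / 2 * (h ^ (n + 3) * (2 * n + 1) / 12)))) :=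
        norm_vecE_smul_LmatCube_mulVec_moment_add_sub_le hh _ (by positivity)
          (abs_setIntegral_cube_coord_mul_le hh.le htaylor)
    _ = ((2 * (n : ℝ) + 1) / 2) * (L : ℝ) * (h * Real.sqrt n) := by
        field_simp
        ring

/-- Theorem 4.5 of the paper (error bound ad infinitum, hypercube case):
`‖Δ⁻¹·Lₙ·Tₙ − ∇f(x⁰)‖ ≤ ((2n+1)/2)·L_{∇f}·Δ_S`, with `Δ = hⁿ`, `Δ_S = h√n`. -/
theorem error_bound_ad_infinitum_hypercube
    (n : ℕ) (hn : 1 ≤ n)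
    (x0 : EuclideanSpace ℝ (Fin n))
    (h : ℝ) (hh : 0 < h)
    (f : EuclideanSpace ℝ (Fin n) → ℝ)
    (U : Set (EuclideanSpace ℝ (Fin n))) (hU : IsOpen U)
    (hsub : {y : EuclideanSpace ℝ (Fin n) | ∀ l, y l - x0 l ∈ Set.Icc (0 : ℝ) h} ⊆ U)
    (hf : ContDiffOn ℝ 2 f U)
    (L : NNReal)
    (hlip : LipschitzOnWith L (gradient f)
      {y : EuclideanSpace ℝ (Fin n) | ∀ l, y l - x0 l ∈ Set.Icc (0 : ℝ) h}) :
    ‖vecE ((h ^ n : ℝ)⁻¹ •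
        Matrix.mulVec (LmatCube n h)
          (fun j => ∫ x in cube n h, x j * (f (x0 + x) - f x0)))
      - gradient f x0‖
      ≤ ((2 * (n : ℝ) + 1) / 2) * (L : ℝ) * (h * Real.sqrt n) :=
  error_bound_ad_infinitum_hypercube_general n x0 h hh f U hU hsub hf L hlip

end
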